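/- For every finite simple graph G with at least one vertex and every vertex x of LAT(G), there exists a vertex y of LAT(G) whose distance from x is at least 3 (i.e., the radius of LAT(G) is at least 3). -/

import Mathlib

open SimpleGraph

/-- Transitive step: each vertex `x` gets a clone `x'` adjacent to the closed
neighborhood of `x`. Original vertices are `Sum.inl`, clones are `Sum.inr`. -/
def LTstep {V : Type} (G : SimpleGraph V) : SimpleGraph (V ⊕ V) where
  Adj x y :=
    match x, y with
    | Sum.inl a, Sum.inl b => G.Adj a b
    | Sum.inl a, Sum.inr b => a = b ∨ G.Adj a b
    | Sum.inr a, Sum.inl b => b = a ∨ G.Adj b a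
    | Sum.inr _, Sum.inr _ => False
  symm := by
    constructor
    rintro (a|a) (b|b) h
    · exact h.symm
    · exact h
    · exact h
    · exact h.elim
  loopless := by
    constructor
    rintro (a|a) h
    · exact G.loopless.irrefl a h
    · exact h

/-- Anti-transitive step: each vertex `x` gets an anti-clone `x*` adjacent to the
complement of the closed neighborhood of `x`. -/
def LATstep {V : Type} (G : SimpleGraph V) : SimpleGraph (V ⊕ V) where
  Adj x y :=
    match x, y with
    | Sum.inl a, Sum.inl b => G.Adj a b
    | Sum.inl a, Sum.inr b => a ≠ b ∧ ¬ G.Adj a b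
    | Sum.inr a, Sum.inl b => b ≠ a ∧ ¬ G.Adj b a
    | Sum.inr _, Sum.inr _ => False
  symm := by
    constructor
    rintro (a|a) (b|b) h
    · exact h.symm
    · exact h
    · exact h
    · exact h.elim
  loopless := by
    constructor
    rintro (a|a) h
    · exact G.loopless.irrefl a h
    · exact h

/-- The vertex type of the `t`-th iterated local model graph. -/
def ILMVertex (V : Type) : ℕ → Type
  | 0 => V
  | t + 1 => ILMVertex V t ⊕ ILMVertex V t

instance ILMVertex.fintype {V : Type} [Fintype V] : ∀ t, Fintype (ILMVertex V t)
  | 0 => inferInstanceAs (Fintype V)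
  | t + 1 =>
    letI := ILMVertex.fintype (V := V) t
    inferInstanceAs (Fintype (ILMVertex V t ⊕ ILMVertex V t))

instance ILMVertex.nonempty {V : Type} [Nonempty V] : ∀ t, Nonempty (ILMVertex V t)
  | 0 => inferInstanceAs (Nonempty V)
  | t + 1 =>
    letI := ILMVertex.nonempty (V := V) t
    inferInstanceAs (Nonempty (ILMVertex V t ⊕ ILMVertex V t))

/-- The iterated local model: at step `t` apply a transitive step if `S t = true`
(i.e. `s_t = 1`) and an anti-transitive step if `S t = false` (i.e. `s_t = 0`). -/
def ILM {V : Type} (S : ℕ → Bool) (G : SimpleGraph V) : (t : ℕ) → SimpleGraph (ILMVertex V t)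
  | 0 => G
  | t + 1 => if S t then LTstep (ILM S G t) else LATstep (ILM S G t)


lemma edist_ge_three_of {V : Type} {G : SimpleGraph V} {x y : V}
    (hne : x ≠ y) (hadj : ¬ G.Adj x y) (h2 : ∀ z, ¬(G.Adj x z ∧ G.Adj z y)) :
    3 ≤ G.edist x y := by
  by_contra h
  push_neg at h
  have htop : G.edist x y ≠ ⊤ := fun ht => by simp [ht] at h
  obtain ⟨p, hp⟩ := SimpleGraph.exists_walk_of_edist_ne_top htop
  have hlen : (p.length : ℕ∞) < 3 := hp ▸ h
  have : p.length < 3 := by exact_mod_cast hlen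
  match p, this with
  | SimpleGraph.Walk.nil, _ => exact hne rfl
  | SimpleGraph.Walk.cons h1 SimpleGraph.Walk.nil, _ => exact hadj h1
  | SimpleGraph.Walk.cons h1 (SimpleGraph.Walk.cons hh SimpleGraph.Walk.nil), _ =>
      exact h2 _ ⟨h1, hh⟩

/-- For every finite simple graph `G` with at least one vertex, every
vertex of `LAT(G)` has some vertex at distance at least `3` from it
(the radius of `LAT(G)` is at least `3`). -/
theorem LATstep_radius_ge_three {V : Type} [Fintype V] [Nonempty V] (G : SimpleGraph V) :
    ∀ x : V ⊕ V, ∃ y : V ⊕ V, 3 ≤ (LATstep G).edist x y := by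
  rintro (a|a)
  · refine ⟨Sum.inr a, edist_ge_three_of (by simp) (fun h => h.1 rfl) ?_⟩
    rintro (b|b) ⟨h1, h2⟩
    · exact h2.2 h1.symm
    · exact h2
  · refine ⟨Sum.inl a, edist_ge_three_of (by simp) (fun h => h.1 rfl) ?_⟩
    rintro (b|b) ⟨h1, h2⟩
    · exact h1.2 h2
    · exact h1
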